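/- For fixed y > 0, z > 0, α > 0 and any A, B with y^(1/α) ≤ A ≤ B, the maximum of g(x) = (y * z^x / x^α)^x over x ∈ [A, B] is at most the maximum of (y * (e/A)^α)^(A/2), g(A), and g(B). -/

import Mathlib

open Real Set

/-!
Write `g = exp ∘ logG`. On a compact interval `logG` attains its maximum either at an endpoint
or at an interior critical point `c`. The critical-point equation
`log y + 2 c log z = α (log c + 1)` eliminates `log z`, and turns `logG c` into
`critValue c = log ((y (e/c)^α)^(c/2))`. The derivative of `critValue` is `(log y - α log t) / 2`,
which is nonpositive once `t ≥ y^(1/α)`, so `critValue c ≤ critValue A`.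
-/

theorem le_max_of_forall_isLocalMax_le {X Y : Type*} [ConditionallyCompleteLinearOrder X]
    [TopologicalSpace X] [OrderTopology X] [LinearOrder Y] [TopologicalSpace Y]
    [ClosedIciTopology Y] {f : X → Y} {a b x : X} {K : Y} (hf : ContinuousOn f (Icc a b))
    (hK : ∀ c ∈ Ioo a b, IsLocalMax f c → f c ≤ K) (hx : x ∈ Icc a b) :
    f x ≤ max K (max (f a) (f b)) := by
  obtain ⟨c, ⟨hac, hcb⟩, hc⟩ := isCompact_Icc.exists_isMaxOn ⟨x, hx⟩ hf
  refine (hc hx).trans ?_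
  rcases hac.eq_or_lt with rfl | hac
  · exact le_max_of_le_right (le_max_left _ _)
  rcases hcb.eq_or_lt with rfl | hcb
  · exact le_max_of_le_right (le_max_right _ _)
  exact le_max_of_le_left (hK c ⟨hac, hcb⟩ (hc.isLocalMax (Icc_mem_nhds hac hcb)))

namespace RpowSelf

variable (y z α : ℝ)

noncomputable def logG (t : ℝ) : ℝ := t * log y + t ^ 2 * log z - α * (t * log t)

noncomputable def critValue (t : ℝ) : ℝ := t / 2 * (log y + α) - α / 2 * (t * log t)

variable {y z α}

theorem rpow_self_eq_exp_logG (hy : 0 < y) (hz : 0 < z) {t : ℝ} (ht : 0 < t) :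
    (y * z ^ t / t ^ α) ^ t = exp (logG y z α t) := by
  rw [rpow_def_of_pos (by positivity), log_div (by positivity) (by positivity),
    log_mul hy.ne' (by positivity), log_rpow hz, log_rpow ht, logG]
  ring_nf

theorem rpow_half_eq_exp_critValue (hy : 0 < y) {t : ℝ} (ht : 0 < t) :
    (y * (exp 1 / t) ^ α) ^ (t / 2) = exp (critValue y α t) := by
  rw [rpow_def_of_pos (by positivity), log_mul hy.ne' (by positivity), log_rpow (by positivity),
    log_div (exp_pos 1).ne' ht.ne', log_exp, critValue]
  ring_nf

theorem continuous_logG : Continuous (logG y z α) := by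
  unfold logG
  fun_prop

theorem hasDerivAt_logG {t : ℝ} (ht : t ≠ 0) :
    HasDerivAt (logG y z α) (log y + 2 * t * log z - α * (log t + 1)) t := by
  have := (((hasDerivAt_id' t).mul_const (log y)).add
    ((hasDerivAt_pow 2 t).mul_const (log z))).sub ((hasDerivAt_mul_log ht).const_mul α)
  exact this.congr_deriv (by push_cast; ring)

theorem hasDerivAt_critValue {t : ℝ} (ht : t ≠ 0) :
    HasDerivAt (critValue y α) ((log y - α * log t) / 2) t := by
  have := (((hasDerivAt_id' t).div_const 2).mul_const (log y + α)).sub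
    ((hasDerivAt_mul_log ht).const_mul (α / 2))
  exact this.congr_deriv (by ring)

theorem logG_eq_critValue_of_isLocalMax {c : ℝ} (hc : 0 < c) (hmax : IsLocalMax (logG y z α) c) :
    logG y z α c = critValue y α c := by
  have hcrit := hmax.hasDerivAt_eq_zero (hasDerivAt_logG hc.ne')
  unfold logG critValue
  linear_combination c / 2 * hcrit

theorem antitoneOn_critValue (hy : 0 < y) (hα : 0 < α) {A : ℝ} (hA : y ^ (1 / α) ≤ A) :
    AntitoneOn (critValue y α) (Ici A) := by
  have hA₀ : 0 < A := (rpow_pos_of_pos hy _).trans_le hA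
  have hlogA : log y ≤ α * log A := by
    have := log_le_log (rpow_pos_of_pos hy _) hA
    rw [log_rpow hy, one_div, inv_mul_le_iff₀ hα] at this
    exact this
  have hderiv : ∀ t ∈ Ici A, HasDerivAt (critValue y α) ((log y - α * log t) / 2) t :=
    fun t ht ↦ hasDerivAt_critValue (hA₀.trans_le ht).ne'
  refine antitoneOn_of_hasDerivWithinAt_nonpos (convex_Ici A)
    (fun t ht ↦ (hderiv t ht).continuousAt.continuousWithinAt)
    (fun t ht ↦ (hderiv t (interior_subset ht)).hasDerivWithinAt) fun t ht ↦ ?_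
  have hlogt := log_le_log hA₀ (interior_subset ht : A ≤ t)
  linarith [mul_le_mul_of_nonneg_left hlogt hα.le]

end RpowSelf

open RpowSelf in
theorem stmt_7_general (y z α A B : ℝ) (hy : 0 < y) (hz : 0 < z) (hα : 0 < α)
    (hA : y ^ (1 / α) ≤ A) :
    ∀ x ∈ Set.Icc A B,
      (y * z ^ x / x ^ α) ^ x
        ≤ max ((y * (Real.exp 1 / A) ^ α) ^ (A / 2))
            (max ((y * z ^ A / A ^ α) ^ A) ((y * z ^ B / B ^ α) ^ B)) := by
  intro x hx
  have hA₀ : 0 < A := (rpow_pos_of_pos hy _).trans_le hA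
  have hlogG : logG y z α x ≤ max (critValue y α A) (max (logG y z α A) (logG y z α B)) :=
    le_max_of_forall_isLocalMax_le continuous_logG.continuousOn (fun c hc hmax ↦
      (logG_eq_critValue_of_isLocalMax (hA₀.trans hc.1) hmax).trans_le
        (antitoneOn_critValue hy hα hA self_mem_Ici hc.1.le hc.1.le)) hx
  rw [rpow_self_eq_exp_logG hy hz (hA₀.trans_le hx.1), rpow_half_eq_exp_critValue hy hA₀,
    rpow_self_eq_exp_logG hy hz hA₀, rpow_self_eq_exp_logG hy hz (hA₀.trans_le (hx.1.trans hx.2)),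
    ← exp_monotone.map_max, ← exp_monotone.map_max]
  exact exp_le_exp.mpr hlogG

/-- For `y, z, α > 0` and `y^(1/α) ≤ A ≤ B`, the maximum of `g(x) = (y z^x / x^α)^x`
over `[A, B]` is at most `max { (y (e/A)^α)^(A/2), g(A), g(B) }`. -/
theorem stmt_7 (y z α A B : ℝ) (hy : 0 < y) (hz : 0 < z) (hα : 0 < α)
    (hA : y ^ (1 / α) ≤ A) (hAB : A ≤ B) :
    ∀ x ∈ Set.Icc A B,
      (y * z ^ x / x ^ α) ^ x
        ≤ max ((y * (Real.exp 1 / A) ^ α) ^ (A / 2))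
            (max ((y * z ^ A / A ^ α) ^ A) ((y * z ^ B / B ^ α) ^ B)) :=
  stmt_7_general y z α A B hy hz hα hA
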